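/- For every ε > 0 there exist positive constants K₁ and K₂ such that for all λ > 1: K₁ (K+λ)^{2δ/σ²} / λ² ≤ (1/ω(λ)) exp{ ∫_1^λ φ(z)/ω(z) dz } ≤ K₂ (K+λ)^{2δ/σ² + ε} / λ². -/

import Mathlib

/-!
Write `ω z = σ²/2 · z (z + K)` and `φ z = δ z + ψ z`, where `ψ z = ∫ (1 - e^{-zu}) μ(du)` is
nonnegative, nondecreasing and `o(z)` (dominated convergence against `min 1 u`). Hence
`(2δ/σ²)/(z + K) ≤ φ z / ω z` for `z ≥ 1`, and `φ z / ω z ≤ (2δ/σ² + ε)/(z + K)` for large `z`.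
Integrating, `∫_1^λ φ/ω` lies between `(2δ/σ²) log ((λ+K)/(1+K))` and a constant plus
`(2δ/σ² + ε) log ((λ+K)/(1+K))`; exponentiating and using `λ² ≤ λ (λ + K) ≤ (1 + K) λ²` for
`λ ≥ 1` gives both bounds.
-/

open MeasureTheory Set Filter Topology Real

lemma one_sub_exp_neg_nonneg {x : ℝ} (hx : 0 ≤ x) : 0 ≤ 1 - exp (-x) :=
  sub_nonneg.2 (exp_le_one_iff.2 (neg_nonpos.2 hx))

lemma one_sub_exp_neg_le_min (x : ℝ) : 1 - exp (-x) ≤ min 1 x :=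
  le_min (by linarith [exp_pos (-x)]) (by linarith [one_sub_le_exp_neg x])

lemma min_one_mul_le (z : ℝ) {u : ℝ} (hu : 0 ≤ u) :
    min 1 (z * u) ≤ max 1 z * min 1 u := by
  rcases le_total u 1 with h | h
  · rw [min_eq_right h]
    exact (min_le_right _ _).trans (mul_le_mul_of_nonneg_right (le_max_right _ _) hu)
  · rw [min_eq_left h, mul_one]
    exact (min_le_left _ _).trans (le_max_left _ _)

lemma one_sub_exp_neg_mul_le (z : ℝ) {u : ℝ} (hu : 0 ≤ u) :
    1 - exp (-(z * u)) ≤ max 1 z * min 1 u :=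
  (one_sub_exp_neg_le_min _).trans (min_one_mul_le z hu)

noncomputable def laplaceExponent (ν : Measure ℝ) (z : ℝ) : ℝ :=
  ∫ u, (1 - exp (-(z * u))) ∂ν

section LaplaceExponent

variable {ν : Measure ℝ}

lemma laplaceExponent_nonneg (hν : ∀ᵐ u ∂ν, 0 ≤ u) {z : ℝ} (hz : 0 ≤ z) :
    0 ≤ laplaceExponent ν z :=
  integral_nonneg_of_ae <| hν.mono fun _ hu => one_sub_exp_neg_nonneg (mul_nonneg hz hu)

lemma integrable_one_sub_exp_neg_mul (hν : ∀ᵐ u ∂ν, 0 ≤ u)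
    (hint : Integrable (fun u => min 1 u) ν) {z : ℝ} (hz : 0 ≤ z) :
    Integrable (fun u => 1 - exp (-(z * u))) ν := by
  refine (hint.const_mul (max 1 z)).mono (by fun_prop) (hν.mono fun u hu => ?_)
  rw [norm_of_nonneg (one_sub_exp_neg_nonneg (mul_nonneg hz hu))]
  exact (one_sub_exp_neg_mul_le z hu).trans (le_abs_self _)

lemma monotoneOn_laplaceExponent (hν : ∀ᵐ u ∂ν, 0 ≤ u)
    (hint : Integrable (fun u => min 1 u) ν) : MonotoneOn (laplaceExponent ν) (Ici 0) := by
  intro x hx y hy hxy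
  refine integral_mono_ae (integrable_one_sub_exp_neg_mul hν hint hx)
    (integrable_one_sub_exp_neg_mul hν hint hy) (hν.mono fun u hu => ?_)
  have : exp (-(y * u)) ≤ exp (-(x * u)) := by gcongr
  linarith

lemma tendsto_laplaceExponent_div_atTop (hν : ∀ᵐ u ∂ν, 0 ≤ u)
    (hint : Integrable (fun u => min 1 u) ν) :
    Tendsto (fun z => laplaceExponent ν z / z) atTop (𝓝 0) := by
  unfold laplaceExponent
  have hdct := tendsto_integral_filter_of_dominated_convergence (μ := ν) (l := atTop)
    (F := fun z u => (1 - exp (-(z * u))) / z) (f := fun _ => 0) (fun u => min 1 u)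
    (Eventually.of_forall fun z => by fun_prop) ?_ hint ?_
  · simpa only [integral_zero, integral_div] using hdct
  · filter_upwards [eventually_ge_atTop 1] with z hz
    filter_upwards [hν] with u hu
    have hz0 : 0 < z := by linarith
    rw [norm_of_nonneg (div_nonneg (one_sub_exp_neg_nonneg (mul_nonneg hz0.le hu)) hz0.le),
      div_le_iff₀ hz0]
    exact (one_sub_exp_neg_mul_le z hu).trans_eq (by rw [max_eq_right hz, mul_comm])
  · filter_upwards [hν] with u hu
    refine squeeze_zero' ?_ ?_ tendsto_inv_atTop_zero
    · filter_upwards [eventually_ge_atTop 0] with z hz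
      exact div_nonneg (one_sub_exp_neg_nonneg (mul_nonneg hz hu)) hz
    · filter_upwards [eventually_gt_atTop 0] with z hz
      rw [div_eq_mul_inv]
      exact mul_le_of_le_one_left (inv_nonneg.2 hz.le) (by linarith [exp_pos (-(z * u))])

end LaplaceExponent

lemma eventually_le_mul_of_tendsto_div {ψ : ℝ → ℝ} (hψ : Tendsto (fun z => ψ z / z) atTop (𝓝 0))
    {η : ℝ} (hη : 0 < η) : ∀ᶠ z in atTop, ψ z ≤ η * z := by
  filter_upwards [hψ.eventually (eventually_le_nhds hη), eventually_gt_atTop 0] with z hz hz0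
  rwa [div_le_iff₀ hz0] at hz

section LogGrowth

variable {f : ℝ → ℝ} {a b K A : ℝ}

lemma integral_div_add (hab : a ≤ b) (ha : 0 < a + K) (A : ℝ) :
    ∫ z in a..b, A / (z + K) = A * log ((b + K) / (a + K)) := by
  simp only [div_eq_mul_inv, intervalIntegral.integral_const_mul,
    intervalIntegral.integral_comp_add_right (fun z => z⁻¹)]
  rw [integral_inv_of_pos ha (by linarith), div_eq_mul_inv]

lemma intervalIntegrable_div_add (hab : a ≤ b) (ha : 0 < a + K) (A : ℝ) :
    IntervalIntegrable (fun z => A / (z + K)) volume a b := by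
  refine ContinuousOn.intervalIntegrable fun z hz => ?_
  rw [uIcc_of_le hab] at hz
  exact (continuousAt_const.div (by fun_prop) (by linarith [hz.1])).continuousWithinAt

lemma mul_log_le_integral (hab : a ≤ b) (ha : 0 < a + K) (hf : IntervalIntegrable f volume a b)
    (hlow : ∀ z ∈ Icc a b, A / (z + K) ≤ f z) :
    A * log ((b + K) / (a + K)) ≤ ∫ z in a..b, f z := by
  rw [← integral_div_add hab ha]
  exact intervalIntegral.integral_mono_on hab (intervalIntegrable_div_add hab ha A) hf hlow

lemma integral_le_mul_log (hab : a ≤ b) (ha : 0 < a + K) (hf : IntervalIntegrable f volume a b)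
    (hup : ∀ z ∈ Icc a b, f z ≤ A / (z + K)) :
    ∫ z in a..b, f z ≤ A * log ((b + K) / (a + K)) := by
  rw [← integral_div_add hab ha]
  exact intervalIntegral.integral_mono_on hab hf (intervalIntegrable_div_add hab ha A) hup

lemma mul_log_div_add_nonneg (hab : a ≤ b) (ha : 0 < a + K) (hA : 0 ≤ A) :
    0 ≤ A * log ((b + K) / (a + K)) :=
  mul_nonneg hA (log_nonneg ((one_le_div ha).2 (by linarith)))

lemma exists_integral_le_add_mul_log (ha : 0 < a + K) (hA : 0 ≤ A)
    (hf : ∀ b, a ≤ b → IntervalIntegrable f volume a b) (hf0 : ∀ z, a ≤ z → 0 ≤ f z)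
    (hup : ∀ᶠ z in atTop, f z ≤ A / (z + K)) :
    ∃ C, ∀ b, a ≤ b → ∫ z in a..b, f z ≤ C + A * log ((b + K) / (a + K)) := by
  obtain ⟨Z, hZ⟩ := eventually_atTop.1 (hup.and (eventually_ge_atTop a))
  have hZa : a ≤ Z := (hZ Z le_rfl).2
  refine ⟨∫ z in a..Z, f z, fun b hab => ?_⟩
  have hf' (c d : ℝ) (hc : a ≤ c) (hd : a ≤ d) : IntervalIntegrable f volume c d :=
    (hf c hc).symm.trans (hf d hd)
  rcases le_total b Z with hbZ | hZb
  · have hrest : 0 ≤ ∫ z in b..Z, f z :=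
      intervalIntegral.integral_nonneg hbZ fun z hz => hf0 z (hab.trans hz.1)
    have := intervalIntegral.integral_add_adjacent_intervals (hf b hab) (hf' b Z hab hZa)
    linarith [mul_log_div_add_nonneg hab ha hA]
  · have hZK : 0 < Z + K := by linarith
    have htail : ∫ z in Z..b, f z ≤ A * log ((b + K) / (Z + K)) :=
      integral_le_mul_log hZb hZK (hf' Z b hZa hab) fun z hz => (hZ z hz.1).1
    have hlog : A * log ((b + K) / (Z + K)) ≤ A * log ((b + K) / (a + K)) := by
      gcongr
      · exact div_pos (by linarith) hZK
      · linarith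
    have := intervalIntegral.integral_add_adjacent_intervals (hf Z hZa) (hf' Z b hZa hab)
    linarith

end LogGrowth

lemma exp_mul_log_div_add {a b K : ℝ} (hab : a ≤ b) (ha : 0 < a + K) (A : ℝ) :
    exp (A * log ((b + K) / (a + K))) = (K + b) ^ A / (a + K) ^ A := by
  rw [mul_comm, ← rpow_def_of_pos (div_pos (by linarith) ha),
    div_rpow (by linarith) ha.le, add_comm b]

lemma exists_rpow_bounds_exp_integral {f : ℝ → ℝ} {K A A' : ℝ} (hK : 0 ≤ K) (hA : 0 ≤ A)
    (hA' : 0 ≤ A') (hf : ∀ b, 1 ≤ b → IntervalIntegrable f volume 1 b)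
    (hlow : ∀ z, 1 ≤ z → A / (z + K) ≤ f z) (hup : ∀ᶠ z in atTop, f z ≤ A' / (z + K)) :
    ∃ K₁ K₂ : ℝ, 0 < K₁ ∧ 0 < K₂ ∧ ∀ b, 1 ≤ b →
      K₁ * (K + b) ^ A ≤ exp (∫ z in (1 : ℝ)..b, f z) ∧
      exp (∫ z in (1 : ℝ)..b, f z) ≤ K₂ * (K + b) ^ A' := by
  have h1K : 0 < 1 + K := by linarith
  have hf0 (z : ℝ) (hz : 1 ≤ z) : 0 ≤ f z :=
    (div_nonneg hA (by linarith)).trans (hlow z hz)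
  obtain ⟨C, hC⟩ := exists_integral_le_add_mul_log h1K hA' hf hf0 hup
  refine ⟨((1 + K) ^ A)⁻¹, exp C, by positivity, exp_pos C, fun b hb => ⟨?_, ?_⟩⟩
  · calc ((1 + K) ^ A)⁻¹ * (K + b) ^ A = exp (A * log ((b + K) / (1 + K))) := by
          rw [exp_mul_log_div_add hb h1K, inv_mul_eq_div]
      _ ≤ exp (∫ z in (1 : ℝ)..b, f z) :=
          exp_le_exp.2 (mul_log_le_integral hb h1K (hf b hb) fun z hz => hlow z hz.1)
  · calc exp (∫ z in (1 : ℝ)..b, f z) ≤ exp (C + A' * log ((b + K) / (1 + K))) :=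
          exp_le_exp.2 (hC b hb)
      _ = exp C * ((K + b) ^ A' / (1 + K) ^ A') := by
          rw [exp_add, exp_mul_log_div_add hb h1K]
      _ ≤ exp C * (K + b) ^ A' := by
          gcongr
          exact div_le_self (by positivity) (one_le_rpow (by linarith) hA')

section Quadratic

variable {σ K x : ℝ}

lemma mul_div_half_sq_mul (a : ℝ) (hσ : σ ≠ 0) (hx : x ≠ 0) (hxK : x + K ≠ 0) :
    a * x / (σ ^ 2 / 2 * (x * (x + K))) = 2 * a / σ ^ 2 / (x + K) := by
  field_simp

lemma one_div_half_sq_mul_le (hσ : σ ≠ 0) (hK : 0 ≤ K) (hx : 0 < x) :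
    1 / (σ ^ 2 / 2 * (x * (x + K))) ≤ 2 / σ ^ 2 / x ^ 2 := by
  rw [div_div, div_le_div_iff₀ (by positivity) (by positivity)]
  have : 0 < σ ^ 2 := by positivity
  nlinarith [mul_nonneg (mul_nonneg this.le hx.le) hK]

lemma le_one_div_half_sq_mul (hσ : σ ≠ 0) (hK : 0 ≤ K) (hx : 1 ≤ x) :
    2 / (σ ^ 2 * (1 + K)) / x ^ 2 ≤ 1 / (σ ^ 2 / 2 * (x * (x + K))) := by
  rw [div_div, div_le_div_iff₀ (by positivity) (by positivity)]
  have : 0 < σ ^ 2 := by positivity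
  nlinarith [mul_nonneg (mul_nonneg this.le (by linarith : 0 ≤ x - 1))
    (mul_nonneg hK (by linarith : 0 ≤ x))]

variable {ψ : ℝ → ℝ} {δ : ℝ}

lemma div_add_le_add_div_half_sq_mul (hσ : σ ≠ 0) (hK : 0 ≤ K)
    (hψ : ∀ z, 0 ≤ z → 0 ≤ ψ z) (hx : 1 ≤ x) :
    2 * δ / σ ^ 2 / (x + K) ≤ (δ * x + ψ x) / (σ ^ 2 / 2 * (x * (x + K))) := by
  rw [← mul_div_half_sq_mul δ hσ (by linarith : 0 < x).ne' (by linarith : 0 < x + K).ne']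
  gcongr
  exact le_add_of_nonneg_right (hψ x (by linarith))

lemma eventually_add_div_half_sq_mul_le (hσ : σ ≠ 0) (hK : 0 ≤ K)
    (hψ : Tendsto (fun z => ψ z / z) atTop (𝓝 0)) {ε : ℝ} (hε : 0 < ε) :
    ∀ᶠ z in atTop,
      (δ * z + ψ z) / (σ ^ 2 / 2 * (z * (z + K))) ≤ (2 * δ / σ ^ 2 + ε) / (z + K) := by
  filter_upwards [eventually_le_mul_of_tendsto_div hψ (η := ε * σ ^ 2 / 2) (by positivity),
    eventually_gt_atTop 0] with z hψz hz
  rw [show 2 * δ / σ ^ 2 + ε = 2 * (δ + ε * σ ^ 2 / 2) / σ ^ 2 by field_simp,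
    ← mul_div_half_sq_mul _ hσ hz.ne' (by linarith : 0 < z + K).ne']
  gcongr
  linarith

lemma intervalIntegrable_add_div_half_sq_mul (hσ : σ ≠ 0) (hK : 0 ≤ K)
    (hψ : MonotoneOn ψ (Ici 0)) {b : ℝ} (hb : 1 ≤ b) :
    IntervalIntegrable (fun z => (δ * z + ψ z) / (σ ^ 2 / 2 * (z * (z + K)))) volume 1 b := by
  have hψb : IntervalIntegrable ψ volume 1 b :=
    (hψ.mono fun z hz => by
      rw [uIcc_of_le hb] at hz; exact zero_le_one.trans hz.1).intervalIntegrable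
  simp only [div_eq_mul_inv]
  refine (((continuous_const_mul δ).intervalIntegrable 1 b).add hψb).mul_continuousOn
    (ContinuousOn.inv₀ (by fun_prop) fun z hz => ?_)
  rw [uIcc_of_le hb] at hz
  have := hz.1
  positivity

theorem exists_bounds_inv_mul_exp_integral (hσ : σ ≠ 0) (hK : 0 ≤ K) (hδ : 0 ≤ δ)
    (hψ0 : ∀ z, 0 ≤ z → 0 ≤ ψ z) (hψmono : MonotoneOn ψ (Ici 0))
    (hψ : Tendsto (fun z => ψ z / z) atTop (𝓝 0)) {ε : ℝ} (hε : 0 < ε) :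
    ∃ K₁ K₂ : ℝ, 0 < K₁ ∧ 0 < K₂ ∧ ∀ x : ℝ, 1 < x →
      K₁ * (K + x) ^ (2 * δ / σ ^ 2) / x ^ 2 ≤ 1 / (σ ^ 2 / 2 * (x * (x + K))) *
          exp (∫ z in (1:ℝ)..x, (δ * z + ψ z) / (σ ^ 2 / 2 * (z * (z + K)))) ∧
      1 / (σ ^ 2 / 2 * (x * (x + K))) *
          exp (∫ z in (1:ℝ)..x, (δ * z + ψ z) / (σ ^ 2 / 2 * (z * (z + K)))) ≤
        K₂ * (K + x) ^ (2 * δ / σ ^ 2 + ε) / x ^ 2 := by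
  obtain ⟨K₁, K₂, hK₁, hK₂, hbounds⟩ := exists_rpow_bounds_exp_integral hK
    (by positivity : 0 ≤ 2 * δ / σ ^ 2) (by positivity : 0 ≤ 2 * δ / σ ^ 2 + ε)
    (fun b hb => intervalIntegrable_add_div_half_sq_mul hσ hK hψmono hb)
    (fun z hz => div_add_le_add_div_half_sq_mul hσ hK hψ0 hz)
    (eventually_add_div_half_sq_mul_le hσ hK hψ hε)
  refine ⟨2 / (σ ^ 2 * (1 + K)) * K₁, 2 / σ ^ 2 * K₂, by positivity, by positivity,
    fun x hx => ⟨?_, ?_⟩⟩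
  · calc 2 / (σ ^ 2 * (1 + K)) * K₁ * (K + x) ^ (2 * δ / σ ^ 2) / x ^ 2
        = 2 / (σ ^ 2 * (1 + K)) / x ^ 2 * (K₁ * (K + x) ^ (2 * δ / σ ^ 2)) := by ring
      _ ≤ _ := mul_le_mul (le_one_div_half_sq_mul hσ hK hx.le) (hbounds x hx.le).1
          (by positivity) (by positivity)
  · calc _ ≤ 2 / σ ^ 2 / x ^ 2 * (K₂ * (K + x) ^ (2 * δ / σ ^ 2 + ε)) :=
          mul_le_mul (one_div_half_sq_mul_le hσ hK (by linarith)) (hbounds x hx.le).2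
            (by positivity) (by positivity)
      _ = 2 / σ ^ 2 * K₂ * (K + x) ^ (2 * δ / σ ^ 2 + ε) / x ^ 2 := by ring

end Quadratic

theorem stmt_8_general
    (μ : Measure ℝ) (δ c σ K : ℝ)
    (hμint : ∫⁻ u in Ioi (0:ℝ), ENNReal.ofReal (min 1 u) ∂μ < ⊤)
    (hδ : 0 ≤ δ) (hc : 0 < c) (hσ : 0 < σ)
    (hK : K = 2 * c / σ ^ 2)
    (φ ω : ℝ → ℝ)
    (hφ : ∀ z, φ z = δ * z + ∫ u in Ioi (0:ℝ), (1 - Real.exp (-(z * u))) ∂μ)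
    (hω : ∀ z, ω z = c * z + σ ^ 2 * z ^ 2 / 2)
    (ε : ℝ) (hε : 0 < ε) :
    ∃ K₁ K₂ : ℝ, 0 < K₁ ∧ 0 < K₂ ∧ ∀ lam : ℝ, 1 < lam →
      K₁ * (K + lam) ^ (2 * δ / σ ^ 2) / lam ^ 2 ≤
        (1 / ω lam) * Real.exp (∫ z in (1:ℝ)..lam, φ z / ω z) ∧
      (1 / ω lam) * Real.exp (∫ z in (1:ℝ)..lam, φ z / ω z) ≤
        K₂ * (K + lam) ^ (2 * δ / σ ^ 2 + ε) / lam ^ 2 := by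
  set ν := μ.restrict (Ioi 0)
  have hν : ∀ᵐ u ∂ν, 0 ≤ u := (ae_restrict_mem measurableSet_Ioi).mono fun _ hu => le_of_lt hu
  have hint : Integrable (fun u => min 1 u) ν :=
    ⟨by fun_prop,
      (hasFiniteIntegral_iff_ofReal (hν.mono fun _ hu => le_min zero_le_one hu)).2 hμint⟩
  have hφψ : φ = fun z => δ * z + laplaceExponent ν z := funext hφ
  have hωK : ω = fun z => σ ^ 2 / 2 * (z * (z + K)) := funext fun z => by
    rw [hω, hK]; field_simp; ring
  subst hφψ hωK
  exact exists_bounds_inv_mul_exp_integral hσ.ne' (hK ▸ by positivity) hδ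
    (fun _ => laplaceExponent_nonneg hν) (monotoneOn_laplaceExponent hν hint)
    (tendsto_laplaceExponent_div_atTop hν hint) hε

/-- For every ε > 0 there exist positive constants K₁, K₂ such that for all λ > 1:
K₁(K+λ)^{2δ/σ²}/λ² ≤ (1/ω(λ)) exp{∫_1^λ φ(z)/ω(z) dz} ≤ K₂(K+λ)^{2δ/σ²+ε}/λ². -/
theorem stmt_8
    (μ : Measure ℝ) (δ c σ K : ℝ)
    (hμ0 : μ (Iic 0) = 0)
    (hμint : ∫⁻ u in Ioi (0:ℝ), ENNReal.ofReal (min 1 u) ∂μ < ⊤)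
    (hδ : 0 ≤ δ) (hc : 0 < c) (hσ : 0 < σ)
    (hK : K = 2 * c / σ ^ 2)
    (φ ω : ℝ → ℝ)
    (hφ : ∀ z, φ z = δ * z + ∫ u in Ioi (0:ℝ), (1 - Real.exp (-(z * u))) ∂μ)
    (hω : ∀ z, ω z = c * z + σ ^ 2 * z ^ 2 / 2)
    (ε : ℝ) (hε : 0 < ε) :
    ∃ K₁ K₂ : ℝ, 0 < K₁ ∧ 0 < K₂ ∧ ∀ lam : ℝ, 1 < lam →
      K₁ * (K + lam) ^ (2 * δ / σ ^ 2) / lam ^ 2 ≤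
        (1 / ω lam) * Real.exp (∫ z in (1:ℝ)..lam, φ z / ω z) ∧
      (1 / ω lam) * Real.exp (∫ z in (1:ℝ)..lam, φ z / ω z) ≤
        K₂ * (K + lam) ^ (2 * δ / σ ^ 2 + ε) / lam ^ 2 :=
  stmt_8_general μ δ c σ K hμint hδ hc hσ hK φ ω hφ hω ε hε
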